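/- arXiv:2412.04579 — 5 statements merged into one kernel-verified Lean document; each statement's English description precedes it below -/
import Mathlib

section
/- Let r ≥ 1, n ≥ 1, and let T be an (rn)×(rn) real symmetric block tridiagonal matrix with r×r symmetric diagonal blocks A_1,…,A_n and r×r upper off-diagonal blocks B_1,…,B_{n−1}, where each B_j is lower triangular with strictly positive diagonal entries (so the (j,j+1) block of T is B_j and the (j+1,j) block is B_jᵀ). Suppose T = Q D Qᵀ where Q is an (rn)×(rn) real orthogonal matrix, D is the diagonal matrix with diagonal entries λ_1,…,λ_{rn}, so the columns of Q are normalized eigenvectors of T. Then ∏_{j=1}^{n−1} det(B_j)^{n−j} = |det M(λ, Q_r)|, where Q_r is the r×(rn) submatrix consisting of the first r rows of Q. -/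
open scoped BigOperators
open Matrix

/-- The block index (0-based) of a row/column index of an `(rn)×(rn)` block matrix. -/
def blkIdx (r n : ℕ) (hr : 0 < r) (i : Fin (r * n)) : Fin n :=
  ⟨i.val / r, (Nat.div_lt_iff_lt_mul hr).mpr (by rw [Nat.mul_comm n r]; exact i.isLt)⟩

/-- The index within a block (0-based). -/
def inIdx (r n : ℕ) (hr : 0 < r) (i : Fin (r * n)) : Fin r :=
  ⟨i.val % r, Nat.mod_lt _ hr⟩

/-- `M(λ,X)`: the `(rn)×(rn)` matrix with `(i,j)` entry
`λ_i^{⌊(j−1)/r⌋} · X_{j − r⌊(j−1)/r⌋, i}` (written 0-based). -/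
def MagicM (r n : ℕ) (hr : 0 < r) (lam : Fin (r * n) → ℝ)
    (X : Matrix (Fin r) (Fin (r * n)) ℝ) : Matrix (Fin (r * n)) (Fin (r * n)) ℝ :=
  Matrix.of fun i j => lam i ^ (j.val / r) * X ⟨j.val % r, Nat.mod_lt _ hr⟩ i

/-- The `r × rn` submatrix consisting of the first `r` rows of an `(rn)×(rn)` matrix. -/
def topRows (r n : ℕ) (hn : 0 < n) (Q : Matrix (Fin (r * n)) (Fin (r * n)) ℝ) :
    Matrix (Fin r) (Fin (r * n)) ℝ :=
  Matrix.of fun m a => Q ⟨m.val, lt_of_lt_of_le m.isLt (Nat.le_mul_of_pos_right r hn)⟩ a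

/-! From `T Q = Q D` we get `T^k Q = Q D^k`, so `M(λ, Q_r)ᵀ = S Q`, where the `k`-th block row
of `S` (`k = 0, …, n-1`) consists of the first `r` rows of `T^k`. Since `T` is block tridiagonal,
`T^k` vanishes beyond its `k`-th block superdiagonal, whose first block is `B_1 ⋯ B_k`. Hence `S` is
block lower triangular with these diagonal blocks, so
`det S = ∏_k ∏_{j ≤ k} det B_j = ∏_j (det B_j)^{n-j} > 0`, and `|det Q| = 1` gives the claim. -/

open Finset

def ofBlk {r n : ℕ} (k : Fin n) (p : Fin r) : Fin (r * n) :=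
  ⟨k.val * r + p.val, by
    calc k.val * r + p.val < (k.val + 1) * r := by rw [add_mul, one_mul]; omega
      _ ≤ n * r := Nat.mul_le_mul_right r k.isLt
      _ = r * n := mul_comm n r⟩

section BlockIndex

variable {r n : ℕ} (hr : 0 < r)

@[simp]
theorem blkIdx_ofBlk (k : Fin n) (p : Fin r) : blkIdx r n hr (ofBlk k p) = k := by
  ext
  simp only [blkIdx, ofBlk]
  rw [Nat.add_comm, Nat.add_mul_div_right _ _ hr, Nat.div_eq_of_lt p.isLt, zero_add]

@[simp]
theorem inIdx_ofBlk (k : Fin n) (p : Fin r) : inIdx r n hr (ofBlk k p) = p := by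
  ext
  simp only [inIdx, ofBlk]
  rw [Nat.add_comm, Nat.add_mul_mod_self_right, Nat.mod_eq_of_lt p.isLt]

@[simp]
theorem ofBlk_blkIdx_inIdx (i : Fin (r * n)) : ofBlk (blkIdx r n hr i) (inIdx r n hr i) = i :=
  Fin.ext (Nat.div_add_mod' i.val r)

@[simp]
theorem ofBlk_inj {k k' : Fin n} {p p' : Fin r} : ofBlk k p = ofBlk k' p' ↔ k = k' ∧ p = p' := by
  refine ⟨fun h => ⟨?_, ?_⟩, fun h => h.1 ▸ h.2 ▸ rfl⟩
  · simpa using congrArg (blkIdx r n p.pos) h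
  · simpa using congrArg (inIdx r n p.pos) h

def blockEquiv : Fin n × Fin r ≃ Fin (r * n) where
  toFun kp := ofBlk kp.1 kp.2
  invFun i := (blkIdx r n hr i, inIdx r n hr i)
  left_inv kp := by simp
  right_inv := ofBlk_blkIdx_inIdx hr

def blockFiberEquiv (a : Fin n) : Fin r ≃ {i : Fin (r * n) // blkIdx r n hr i = a} where
  toFun p := ⟨ofBlk a p, blkIdx_ofBlk hr a p⟩
  invFun i := inIdx r n hr i
  left_inv := inIdx_ofBlk hr a
  right_inv i := by
    ext
    conv_rhs => rw [← ofBlk_blkIdx_inIdx hr i.1, i.2]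

end BlockIndex

theorem Matrix.pow_apply_eq_zero_of_add_lt {ι R : Type*} [Fintype ι] [DecidableEq ι] [Semiring R]
    (b : ι → ℕ) {T : Matrix ι ι R} (hT : ∀ i j, b i + 1 < b j → T i j = 0) :
    ∀ k : ℕ, ∀ {i j : ι}, b i + k < b j → (T ^ k) i j = 0
  | 0, i, j, h => one_apply_ne (by rintro rfl; omega)
  | k + 1, i, j, h => by
    rw [pow_succ, mul_apply]
    refine sum_eq_zero fun a _ => ?_
    by_cases ha : b i + k < b a
    · rw [pow_apply_eq_zero_of_add_lt b hT k ha, zero_mul]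
    · rw [hT a j (by omega), mul_zero]

theorem Matrix.det_pos_of_isLowerTriangular {m R : Type*} [Fintype m] [DecidableEq m]
    [LinearOrder m] [CommRing R] [PartialOrder R] [IsStrictOrderedRing R] {M : Matrix m m R}
    (h : M.IsLowerTriangular) (hd : ∀ i, 0 < M i i) : 0 < M.det := by
  rw [det_of_isLowerTriangular M h]
  exact prod_pos fun i _ => hd i

theorem Matrix.abs_det_eq_one_of_mul_transpose_eq_one {m R : Type*} [Fintype m] [DecidableEq m]
    [CommRing R] [LinearOrder R] [IsStrictOrderedRing R] {Q : Matrix m m R} (hQ : Q * Qᵀ = 1) :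
    |Q.det| = 1 := by
  have h := congrArg det hQ
  rw [det_mul, det_transpose, det_one] at h
  rcases mul_self_eq_one_iff.mp h with h | h <;> simp [h]

theorem prod_range_prod_range_eq_prod_pow {M : Type*} [CommMonoid M] (d : ℕ → M) (N : ℕ) :
    ∏ a ∈ range (N + 1), ∏ j ∈ range a, d j = ∏ j ∈ range N, d j ^ (N - j) := by
  induction N with
  | zero => simp
  | succ N ih =>
    rw [prod_range_succ, ih, prod_range_succ (fun j => d j ^ (N + 1 - j)), Nat.add_sub_cancel_left,
      pow_one, prod_range_succ, ← mul_assoc, ← prod_mul_distrib]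
    congr 1
    refine prod_congr rfl fun j hj => ?_
    rw [← pow_succ, Nat.sub_add_comm (mem_range.mp hj).le]

section BlockTridiagonal

variable {R : Type*} [CommRing R] {r n : ℕ} (hr : 0 < r) (hn : 0 < n)

def topBlock (M : Matrix (Fin (r * n)) (Fin (r * n)) R) (a : Fin n) : Matrix (Fin r) (Fin r) R :=
  of fun p q => M (ofBlk ⟨0, hn⟩ p) (ofBlk a q)

theorem topBlock_one : topBlock hn (1 : Matrix (Fin (r * n)) (Fin (r * n)) R) ⟨0, hn⟩ = 1 := by
  ext p q
  simp [topBlock, one_apply]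

def krylovRows (T : Matrix (Fin (r * n)) (Fin (r * n)) R) : Matrix (Fin (r * n)) (Fin (r * n)) R :=
  of fun i j => (T ^ (blkIdx r n hr i).val) (ofBlk ⟨0, hn⟩ (inIdx r n hr i)) j

variable {hr} {T : Matrix (Fin (r * n)) (Fin (r * n)) R}
  (hband : ∀ i j, (blkIdx r n hr i).val + 1 < (blkIdx r n hr j).val → T i j = 0)
  (B : ℕ → Matrix (Fin r) (Fin r) R)
  (hsup : ∀ k (hk : k + 1 < n) p q, T (ofBlk ⟨k, by omega⟩ p) (ofBlk ⟨k + 1, hk⟩ q) = B k p q)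
include hband hsup

theorem topBlock_pow_succ (k : ℕ) (hk : k + 1 < n) :
    topBlock hn (T ^ (k + 1)) ⟨k + 1, hk⟩ = topBlock hn (T ^ k) ⟨k, by omega⟩ * B k := by
  ext m q
  rw [topBlock, of_apply, pow_succ, mul_apply, ← (blockEquiv hr).sum_comp,
    Fintype.sum_prod_type, Fintype.sum_eq_single ⟨k, by omega⟩]
  · simp [blockEquiv, topBlock, mul_apply, hsup]
  · intro b hb
    refine sum_eq_zero fun p _ => ?_
    rcases lt_or_gt_of_ne (Fin.val_ne_of_ne hb) with h | h
    · rw [hband _ _ (by simpa [blockEquiv] using h), mul_zero]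
    · rw [pow_apply_eq_zero_of_add_lt _ hband k (by simpa [blockEquiv] using h), zero_mul]

theorem det_topBlock_pow (a : Fin n) :
    (topBlock hn (T ^ a.val) a).det = ∏ j ∈ range a, (B j).det := by
  obtain ⟨a, ha⟩ := a
  induction a with
  | zero => simp [topBlock_one]
  | succ a ih => rw [topBlock_pow_succ hn hband B hsup a ha, det_mul, ih, prod_range_succ]

omit hsup in
theorem krylovRows_transpose_blockTriangular :
    (krylovRows hr hn T)ᵀ.BlockTriangular (blkIdx r n hr) := fun i j hji =>
  pow_apply_eq_zero_of_add_lt _ hband _ (by simpa using hji)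

theorem det_krylovRows : (krylovRows hr hn T).det = ∏ a : Fin n, ∏ j ∈ range a, (B j).det := by
  rw [← det_transpose, (krylovRows_transpose_blockTriangular hn hband).det_fintype]
  refine prod_congr rfl fun a _ => ?_
  rw [← det_topBlock_pow hn hband B hsup a, ← det_submatrix_equiv_self (blockFiberEquiv hr a),
    ← det_transpose]
  congr 1
  ext p q
  simp [krylovRows, topBlock, blockFiberEquiv, toSquareBlock, toSquareBlockProp]

end BlockTridiagonal

theorem magicM_topRows_eq {r n : ℕ} (hr : 0 < r) (hn : 0 < n) {lam : Fin (r * n) → ℝ}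
    {T Q : Matrix (Fin (r * n)) (Fin (r * n)) ℝ} (hTQ : T * Q = Q * diagonal lam) :
    MagicM r n hr lam (topRows r n hn Q) = (krylovRows hr hn T * Q)ᵀ := by
  ext i j
  have hpow : T ^ (blkIdx r n hr j).val * Q = Q * diagonal (lam ^ (blkIdx r n hr j).val) := by
    rw [← diagonal_pow]
    exact ((SemiconjBy.pow_right hTQ.symm _).eq).symm
  have hrow : ofBlk ⟨0, hn⟩ (inIdx r n hr j) =
      ⟨j.val % r, lt_of_lt_of_le (Nat.mod_lt _ hr) (Nat.le_mul_of_pos_right r hn)⟩ :=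
    Fin.ext (by simp [ofBlk, inIdx])
  change _ = (T ^ (blkIdx r n hr j).val * Q) (ofBlk ⟨0, hn⟩ (inIdx r n hr j)) i
  rw [hpow, mul_diagonal, hrow, mul_comm]
  rfl

theorem statement0 (r n : ℕ) (hr : 0 < r) (hn : 0 < n)
    (A : Fin n → Matrix (Fin r) (Fin r) ℝ)
    (B : Fin (n - 1) → Matrix (Fin r) (Fin r) ℝ)
    (hBlow : ∀ k, ∀ i j : Fin r, i < j → B k i j = 0)
    (hBpos : ∀ k, ∀ i : Fin r, 0 < B k i i)
    (T : Matrix (Fin (r * n)) (Fin (r * n)) ℝ)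
    (hT : ∀ i j : Fin (r * n), T i j =
      if (blkIdx r n hr i).val = (blkIdx r n hr j).val then
        A (blkIdx r n hr i) (inIdx r n hr i) (inIdx r n hr j)
      else if h2 : (blkIdx r n hr i).val + 1 = (blkIdx r n hr j).val then
        B ⟨(blkIdx r n hr i).val, by have := (blkIdx r n hr j).isLt; omega⟩
          (inIdx r n hr i) (inIdx r n hr j)
      else if h3 : (blkIdx r n hr j).val + 1 = (blkIdx r n hr i).val then
        B ⟨(blkIdx r n hr j).val, by have := (blkIdx r n hr i).isLt; omega⟩
          (inIdx r n hr j) (inIdx r n hr i)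
      else 0)
    (lam : Fin (r * n) → ℝ)
    (Q : Matrix (Fin (r * n)) (Fin (r * n)) ℝ)
    (hQ : Q * Qᵀ = 1)
    (hTQ : T = Q * Matrix.diagonal lam * Qᵀ) :
    ∏ k : Fin (n - 1), (B k).det ^ (n - 1 - k.val) =
      |(MagicM r n hr lam (topRows r n hn Q)).det| := by
  set B' : ℕ → Matrix (Fin r) (Fin r) ℝ := fun k => if h : k < n - 1 then B ⟨k, h⟩ else 1
  have hband : ∀ i j, (blkIdx r n hr i).val + 1 < (blkIdx r n hr j).val → T i j = 0 := by
    intro i j h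
    rw [hT, if_neg (by omega), dif_neg (by omega), dif_neg (by omega)]
  have hsup : ∀ k (hk : k + 1 < n) p q,
      T (ofBlk ⟨k, by omega⟩ p) (ofBlk ⟨k + 1, hk⟩ q) = B' k p q := by
    intro k hk p q
    simp [hT, B', show k < n - 1 by omega]
  have hB'pos : ∀ j, 0 < (B' j).det := by
    intro j
    by_cases hj : j < n - 1
    · simpa [B', hj] using det_pos_of_isLowerTriangular (hBlow ⟨j, hj⟩) (hBpos ⟨j, hj⟩)
    · simp [B', hj]
  have hTQ_eigen : T * Q = Q * diagonal lam := by
    rw [hTQ, Matrix.mul_assoc, mul_eq_one_comm.mp hQ, Matrix.mul_one]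
  have hdet := det_krylovRows hn hband B' hsup
  have hdet_pos : 0 < (krylovRows hr hn T).det :=
    hdet ▸ prod_pos fun a _ => prod_pos fun j _ => hB'pos j
  obtain ⟨m, rfl⟩ : ∃ m, n = m + 1 := ⟨n - 1, by omega⟩
  rw [magicM_topRows_eq hr hn hTQ_eigen, det_transpose, det_mul, abs_mul,
    abs_det_eq_one_of_mul_transpose_eq_one hQ, mul_one, abs_of_pos hdet_pos, hdet,
    Fin.prod_univ_eq_prod_range (fun a => ∏ j ∈ range a, (B' j).det),
    prod_range_prod_range_eq_prod_pow, ← Fin.prod_univ_eq_prod_range]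
  exact prod_congr rfl fun k _ => by simp [B']
end

section
/- Let n ≥ 2 and let λ_1,…,λ_{2n} be real numbers. Then Σ_{A ⊆ {1,…,2n}, |A| = n} Δ(A)⁴ Δ(A')⁴ = 2^{−n} · ( Σ_{A ⊆ {1,…,2n}, |A| = n} Δ(A)² Δ(A')² )², where A' denotes the complement of A in {1,…,2n}. -/
open scoped BigOperators

/-- `Δ(A)`: the Vandermonde product `∏_{i,j ∈ A, i<j} (λ_j − λ_i)`. -/
def vdm {N : ℕ} (lam : Fin N → ℝ) (A : Finset (Fin N)) : ℝ :=
  ∏ p ∈ (A ×ˢ A).filter fun p => p.1 < p.2, (lam p.2 - lam p.1)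

/-!
Put `G(A) = ∏_{i ≠ j ∈ A} (x_i - x_j)` (`diffProd`), which is `± Δ(A)²` with a sign depending only
on `|A|`, and, for a `2m`-element set `U`,
`D_m(U) = 2^m ∑_B (G(B) G(U \ B))² - (∑_B G(B) G(U \ B))²` (`halvingDefect`), the sums running
over the `m`-subsets `B` of `U`. We show that `D_m(U)` vanishes as a polynomial over `ℤ`, by
induction on `m`.

Setting `x_i = x_j` kills every term in which `i` and `j` lie on the same side of the partition; the
other terms come in pairs and give `D_{m+1}(U) = 4c² D_m(U \ {i, j})` for some `c`. Hence
`x_i - x_j` divides `D_{m+1}(U)`, and since `D_{m+1}(U)` is symmetric in `x_i, x_j`, so does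
`(x_i - x_j)²`. These squares of pairwise non-associated primes are coprime, so
`G(U) = ± ∏_{i<j} (x_i - x_j)²` divides `D_{m+1}(U)`. But `G(U)` is homogeneous of degree
`(2m+2)(2m+1)`, while `D_{m+1}(U)` is homogeneous of the smaller degree `4m(m+1)`; so
`D_{m+1}(U) = 0`.
-/

open Finset MvPolynomial

lemma prod_offDiag_eq_prod_filter_lt {σ M : Type*} [LinearOrder σ] [CommMonoid M]
    (s : Finset σ) (f : σ × σ → M) :
    ∏ p ∈ s.offDiag, f p = ∏ p ∈ s ×ˢ s with p.1 < p.2, f p * f p.swap := by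
  rw [prod_mul_distrib, ← prod_filter_mul_prod_filter_not s.offDiag (fun p => p.1 < p.2)]
  congr 1
  · congr 1
    ext p
    simp only [mem_filter, mem_offDiag, mem_product]
    constructor
    · rintro ⟨⟨h1, h2, _⟩, h⟩; exact ⟨⟨h1, h2⟩, h⟩
    · rintro ⟨⟨h1, h2⟩, h⟩; exact ⟨⟨h1, h2, h.ne⟩, h⟩
  · refine prod_equiv (Equiv.prodComm σ σ) (fun p => ?_) (fun p _ => rfl)
    simp only [mem_filter, mem_offDiag, mem_product, Equiv.prodComm_apply, Prod.fst_swap,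
      Prod.snd_swap, not_lt]
    constructor
    · rintro ⟨⟨h1, h2, hne⟩, h⟩; exact ⟨⟨h2, h1⟩, lt_of_le_of_ne h (Ne.symm hne)⟩
    · rintro ⟨⟨h2, h1⟩, h⟩; exact ⟨⟨h1, h2, h.ne'⟩, h.le⟩

section DiffProd

variable {σ τ R : Type*} [CommRing R]

def diffProd (x : σ → R) (A : Finset σ) : R :=
  ∏ p ∈ A.offDiag, (x p.1 - x p.2)

def halvingDefect [DecidableEq σ] (x : σ → R) (U : Finset σ) (m : ℕ) : R :=
  2 ^ m * ∑ B ∈ U.powersetCard m, (diffProd x B * diffProd x (U \ B)) ^ 2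
    - (∑ B ∈ U.powersetCard m, diffProd x B * diffProd x (U \ B)) ^ 2

lemma map_diffProd {S F : Type*} [CommRing S] [FunLike F R S] [RingHomClass F R S] (f : F)
    (x : σ → R) (A : Finset σ) : f (diffProd x A) = diffProd (f ∘ x) A := by
  simp [diffProd, map_prod]

lemma map_halvingDefect [DecidableEq σ] {S F : Type*} [CommRing S] [FunLike F R S]
    [RingHomClass F R S] (f : F) (x : σ → R) (U : Finset σ) (m : ℕ) :
    f (halvingDefect x U m) = halvingDefect (f ∘ x) U m := by
  simp [halvingDefect, map_diffProd, map_ofNat]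

lemma diffProd_eq_zero {x : σ → R} {A : Finset σ} {i j : σ} (hij : i ≠ j) (hi : i ∈ A)
    (hj : j ∈ A) (hx : x i = x j) : diffProd x A = 0 :=
  prod_eq_zero (i := (i, j)) (by simp [hi, hj, hij]) (by simp [hx])

lemma diffProd_insert [DecidableEq σ] (x : σ → R) {B : Finset σ} {i : σ} (hi : i ∉ B) :
    diffProd x (insert i B) = (∏ k ∈ B, (x i - x k) * (x k - x i)) * diffProd x B := by
  have hdisj : Disjoint (B.offDiag ∪ {i} ×ˢ B) (B ×ˢ {i}) := by
    rw [disjoint_left]; aesop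
  rw [diffProd, offDiag_insert hi, prod_union hdisj,
    prod_union (disjoint_left.2 (by aesop)), singleton_product, product_singleton,
    prod_map, prod_map, diffProd, prod_mul_distrib]
  simp only [Function.Embedding.coeFn_mk]
  ring

lemma diffProd_map (x : σ → R) (e : τ ↪ σ) (A : Finset τ) :
    diffProd x (A.map e) = diffProd (x ∘ e) A := by
  refine (prod_nbij (fun p => (e p.1, e p.2)) ?_ ?_ ?_ ?_).symm
  · aesop
  · intro p _ q _ h; simp_all [Prod.ext_iff]
  · rintro ⟨a, b⟩ hab
    simp only [coe_offDiag, Set.mem_offDiag, mem_coe, mem_map] at hab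
    obtain ⟨⟨a, ha, rfl⟩, ⟨b, hb, rfl⟩, hne⟩ := hab
    exact ⟨(a, b), by simp_all, rfl⟩
  · intro p _; rfl

lemma halvingDefect_map [DecidableEq σ] [DecidableEq τ] (x : σ → R) (e : τ ↪ σ) (U : Finset τ)
    (m : ℕ) :
    halvingDefect x (U.map e) m = halvingDefect (x ∘ e) U m := by
  simp [halvingDefect, powersetCard_map, ← Finset.map_sdiff, diffProd_map]

lemma sum_powersetCard_succ_eq_sum_insert {M : Type*} [AddCommMonoid M] [DecidableEq σ]
    {U : Finset σ} {i j : σ} (hi : i ∈ U) (hj : j ∈ U) (hij : i ≠ j) (m : ℕ)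
    (F : Finset σ → M) (hboth : ∀ A, i ∈ A → j ∈ A → F A = 0)
    (hnone : ∀ A, i ∉ A → j ∉ A → F A = 0) :
    ∑ A ∈ U.powersetCard (m + 1), F A =
      ∑ B ∈ (U \ {i, j}).powersetCard m, (F (insert i B) + F (insert j B)) := by
  set V := U \ {i, j}
  have hU : U = insert i (insert j V) := by
    ext k; by_cases k = i <;> by_cases k = j <;> simp_all [V]
  have hiV : i ∉ insert j V := by simp [V, hij]
  have hjV : j ∉ V := by simp [V]
  rw [powersetCard_eq_filter, sum_filter, powersetCard_eq_filter, sum_filter, hU,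
    sum_powerset_insert hiV, sum_powerset_insert hjV, sum_powerset_insert hjV, ← sum_add_distrib,
    ← sum_add_distrib, ← sum_add_distrib]
  refine sum_congr rfl fun B hB => ?_
  have hBV := mem_powerset.1 hB
  have hiB : i ∉ B := fun h => hiV (mem_insert_of_mem (hBV h))
  have hjB : j ∉ B := fun h => hjV (hBV h)
  have hijB : i ∉ insert j B := by simp [hij, hiB]
  simp only [hnone B hiB hjB, hboth (insert i (insert j B)) (mem_insert_self _ _)
    (mem_insert_of_mem (mem_insert_self _ _)), card_insert_of_notMem hiB,
    card_insert_of_notMem hjB, card_insert_of_notMem hijB, ite_self, zero_add, add_zero]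
  rw [add_comm, ite_add_ite, add_zero]
  simp only [Nat.add_right_cancel_iff]

lemma diffProd_insert_mul_diffProd_sdiff_insert [DecidableEq σ] {x : σ → R} {U B : Finset σ}
    {a b : σ} (hab : a ≠ b) (hb : b ∈ U) (hx : x a = x b) (hB : B ⊆ U \ {a, b}) :
    diffProd x (insert a B) * diffProd x (U \ insert a B) =
      (∏ k ∈ U \ {a, b}, (x a - x k) * (x k - x a)) *
        (diffProd x B * diffProd x ((U \ {a, b}) \ B)) := by
  have haB : a ∉ B := fun h => by simpa using hB h
  have hbB : b ∉ B := fun h => by simpa using hB h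
  have hsdiff : U \ insert a B = insert b ((U \ {a, b}) \ B) := by
    ext k
    by_cases hka : k = a <;> by_cases hkb : k = b <;> simp_all
  have hbVB : b ∉ (U \ {a, b}) \ B := by simp
  rw [hsdiff, diffProd_insert x haB, diffProd_insert x hbVB, ← hx, ← prod_sdiff hB]
  ring

lemma halvingDefect_succ_of_eq [DecidableEq σ] {x : σ → R} {U : Finset σ} {i j : σ}
    (hi : i ∈ U) (hj : j ∈ U) (hij : i ≠ j) (hx : x i = x j) (m : ℕ) :
    halvingDefect x U (m + 1) =
      4 * (∏ k ∈ U \ {i, j}, (x i - x k) * (x k - x i)) ^ 2 * halvingDefect x (U \ {i, j}) m := by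
  set V := U \ {i, j}
  set c := ∏ k ∈ V, (x i - x k) * (x k - x i)
  set g : Finset σ → R := fun B => diffProd x B * diffProd x (V \ B)
  have hterm : ∀ B ∈ V.powersetCard m,
      diffProd x (insert i B) * diffProd x (U \ insert i B) = c * g B ∧
        diffProd x (insert j B) * diffProd x (U \ insert j B) = c * g B := by
    intro B hB
    have hBV := (mem_powersetCard.1 hB).1
    refine ⟨diffProd_insert_mul_diffProd_sdiff_insert hij hj hx hBV, ?_⟩
    have hBV' : B ⊆ U \ {j, i} := by rw [pair_comm]; exact hBV
    have h := diffProd_insert_mul_diffProd_sdiff_insert hij.symm hi hx.symm hBV'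
    rwa [pair_comm, ← hx] at h
  have hboth : ∀ A, i ∈ A → j ∈ A → diffProd x A * diffProd x (U \ A) = 0 :=
    fun A hiA hjA => by rw [diffProd_eq_zero hij hiA hjA hx, zero_mul]
  have hnone : ∀ A, i ∉ A → j ∉ A → diffProd x A * diffProd x (U \ A) = 0 :=
    fun A hiA hjA => by
      rw [diffProd_eq_zero hij (mem_sdiff.2 ⟨hi, hiA⟩) (mem_sdiff.2 ⟨hj, hjA⟩) hx, mul_zero]
  have hsq : ∑ A ∈ U.powersetCard (m + 1), (diffProd x A * diffProd x (U \ A)) ^ 2 =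
      2 * c ^ 2 * ∑ B ∈ V.powersetCard m, g B ^ 2 := by
    rw [sum_powersetCard_succ_eq_sum_insert hi hj hij m _
      (fun A hiA hjA => by rw [hboth A hiA hjA, sq, zero_mul])
      (fun A hiA hjA => by rw [hnone A hiA hjA, sq, zero_mul]), mul_sum]
    refine sum_congr rfl fun B hB => ?_
    rw [(hterm B hB).1, (hterm B hB).2]
    ring
  have hlin : ∑ A ∈ U.powersetCard (m + 1), diffProd x A * diffProd x (U \ A) =
      2 * c * ∑ B ∈ V.powersetCard m, g B := by
    rw [sum_powersetCard_succ_eq_sum_insert hi hj hij m _ hboth hnone, mul_sum]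
    refine sum_congr rfl fun B hB => ?_
    rw [(hterm B hB).1, (hterm B hB).2]
    ring
  rw [halvingDefect, halvingDefect, hsq, hlin]
  ring

end DiffProd

section DiffProdX

variable {σ R : Type*} [CommRing R]

/-- `rename (Function.update id i j)` substitutes `X j` for `X i`. -/
lemma X_sub_X_dvd_iff [DecidableEq σ] (i j : σ) (p : MvPolynomial σ R) :
    X i - X j ∣ p ↔ rename (Function.update id i j) p = 0 := by
  set I := Ideal.span {(X i - X j : MvPolynomial σ R)}
  constructor
  · rintro ⟨q, rfl⟩
    by_cases hij : j = i <;> simp [hij]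
  · intro h
    have hmk : Ideal.Quotient.mkₐ R I =
        (Ideal.Quotient.mkₐ R I).comp (rename (Function.update id i j)) := by
      refine algHom_ext fun k => ?_
      by_cases hk : k = i
      · subst hk
        simpa using Ideal.Quotient.eq.2 (Ideal.mem_span_singleton_self _)
      · simp [Function.update_of_ne hk]
    have hp := congrArg (· p) hmk
    simp only [AlgHom.comp_apply, h, map_zero, Ideal.Quotient.mkₐ_eq_mk] at hp
    exact Ideal.mem_span_singleton.1 (Ideal.Quotient.eq_zero_iff_mem.1 hp)

lemma prime_X_sub_X [IsDomain R] {i j : σ} (hij : i ≠ j) :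
    Prime (X i - X j : MvPolynomial σ R) := by
  classical
  have hker : Ideal.span {(X i - X j : MvPolynomial σ R)} =
      RingHom.ker (rename (R := R) (Function.update id i j)) := by
    ext p
    rw [Ideal.mem_span_singleton, RingHom.mem_ker, X_sub_X_dvd_iff]
  exact (Ideal.span_singleton_prime (sub_ne_zero.2 (X_injective.ne hij))).1
    (hker ▸ RingHom.ker_isPrime _)

lemma eq_and_eq_or_eq_and_eq_of_X_sub_X_dvd [Nontrivial R] {a b c d : σ} (hcd : c ≠ d)
    (h : (X a - X b : MvPolynomial σ R) ∣ X c - X d) : a = c ∧ b = d ∨ a = d ∧ b = c := by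
  classical
  rw [X_sub_X_dvd_iff] at h
  simp only [map_sub, rename_X, sub_eq_zero, X_injective.eq_iff, Function.update_apply] at h
  split_ifs at h <;> simp_all

lemma isRelPrime_X_sub_X [IsDomain R] {a b c d : σ} (hab : a ≠ b) (hcd : c ≠ d)
    (h : ¬ (a = c ∧ b = d ∨ a = d ∧ b = c)) :
    IsRelPrime (X a - X b : MvPolynomial σ R) (X c - X d) :=
  (prime_X_sub_X hab).irreducible.isRelPrime_iff_not_dvd.2
    fun hdvd => h (eq_and_eq_or_eq_and_eq_of_X_sub_X_dvd hcd hdvd)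

lemma sq_X_sub_X_dvd [DecidableEq σ] [IsDomain R] [CharZero R] {i j : σ} (hij : i ≠ j)
    {p : MvPolynomial σ R} (hswap : rename (Equiv.swap i j) p = p)
    (hvan : rename (Function.update id i j) p = 0) : (X i - X j) ^ 2 ∣ p := by
  obtain ⟨q, rfl⟩ := (X_sub_X_dvd_iff i j p).2 hvan
  have hq : rename (Equiv.swap i j) q = -q := by
    rw [map_mul, map_sub, rename_X, rename_X, Equiv.swap_apply_left,
      Equiv.swap_apply_right] at hswap
    have h : (X i - X j) * (rename (Equiv.swap i j) q + q) = 0 := by linear_combination -hswap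
    exact eq_neg_of_add_eq_zero_left ((mul_eq_zero.1 h).resolve_left (prime_X_sub_X hij).ne_zero)
  have hcomp : Function.update id i j ∘ Equiv.swap i j = Function.update id i j := by
    funext k
    simp only [Function.comp_apply, Function.update_apply, Equiv.swap_apply_def, id]
    split_ifs <;> simp_all
  have hqvan : rename (Function.update id i j) q = 0 := by
    have h := congrArg (rename (Function.update id i j)) hq
    rw [rename_rename, hcomp, map_neg] at h
    exact self_eq_neg.1 h
  rw [pow_two]
  exact mul_dvd_mul_left _ ((X_sub_X_dvd_iff i j q).2 hqvan)

lemma rename_swap_halvingDefect_X [DecidableEq σ] {U : Finset σ} {i j : σ} (hi : i ∈ U)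
    (hj : j ∈ U) (m : ℕ) :
    rename (Equiv.swap i j) (halvingDefect (X : σ → MvPolynomial σ R) U m) =
      halvingDefect X U m := by
  have hmap : U.map (Equiv.swap i j).toEmbedding = U := map_perm fun k hk => by
    by_contra hkU
    exact hk (Equiv.swap_apply_of_ne_of_ne (by rintro rfl; exact hkU hi)
      (by rintro rfl; exact hkU hj))
  have hX : ⇑(rename (R := R) (Equiv.swap i j)) ∘ X = X ∘ (Equiv.swap i j).toEmbedding := by
    funext k; simp
  rw [map_halvingDefect, hX, ← halvingDefect_map, hmap]

lemma rename_update_halvingDefect_X_succ [DecidableEq σ] {U : Finset σ} {i j : σ} (hi : i ∈ U)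
    (hj : j ∈ U) (hij : i ≠ j) (m : ℕ) :
    rename (Function.update id i j) (halvingDefect (X : σ → MvPolynomial σ R) U (m + 1)) =
      4 * (∏ k ∈ U \ {i, j}, (X j - X k) * (X k - X j)) ^ 2 *
        rename (Function.update id i j) (halvingDefect X (U \ {i, j}) m) := by
  rw [map_halvingDefect, halvingDefect_succ_of_eq hi hj hij (by simp [hij.symm]) m,
    ← map_halvingDefect]
  congr 3
  refine prod_congr rfl fun k hk => ?_
  have hki : k ≠ i := fun h => by simp [h] at hk
  simp [Function.update_of_ne hki]

lemma diffProd_X_ne_zero [IsDomain R] (A : Finset σ) :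
    diffProd (X : σ → MvPolynomial σ R) A ≠ 0 :=
  prod_ne_zero_iff.2 fun _ hp => sub_ne_zero.2 (X_injective.ne (mem_offDiag.1 hp).2.2)

lemma isHomogeneous_diffProd_X (A : Finset σ) :
    (diffProd (X : σ → MvPolynomial σ R) A).IsHomogeneous (#A * #A - #A) := by
  rw [← offDiag_card, card_eq_sum_ones]
  exact IsHomogeneous.prod _ _ _ fun p _ => (isHomogeneous_X R p.1).sub (isHomogeneous_X R p.2)

lemma isHomogeneous_halvingDefect_X [DecidableEq σ] {U : Finset σ} {m : ℕ} (hU : #U = 2 * m) :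
    (halvingDefect (X : σ → MvPolynomial σ R) U m).IsHomogeneous (4 * (m * m - m)) := by
  have hterm : ∀ B ∈ U.powersetCard m,
      (diffProd X B * diffProd X (U \ B) : MvPolynomial σ R).IsHomogeneous (2 * (m * m - m)) := by
    intro B hB
    obtain ⟨hBU, hB⟩ := mem_powersetCard.1 hB
    have hc : #(U \ B) = m := by rw [card_sdiff_of_subset hBU]; omega
    have h := (isHomogeneous_diffProd_X (R := R) B).mul (isHomogeneous_diffProd_X (U \ B))
    rwa [hB, hc, ← two_mul] at h
  have hsum := IsHomogeneous.sum _ _ _ hterm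
  refine IsHomogeneous.sub ?_ ?_
  · convert ((isHomogeneous_C σ (2 : R)).pow m).mul
      (IsHomogeneous.sum _ _ _ fun B hB => (hterm B hB).pow 2) using 1
    · simp [map_ofNat]
    · ring
  · convert hsum.pow 2 using 1
    ring

lemma diffProd_X_dvd [LinearOrder σ] [IsDomain R] [UniqueFactorizationMonoid R] {U : Finset σ}
    {p : MvPolynomial σ R}
    (h : ∀ i ∈ U, ∀ j ∈ U, i < j → (X i - X j) ^ 2 ∣ p) : diffProd X U ∣ p := by
  rw [diffProd, prod_offDiag_eq_prod_filter_lt]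
  refine prod_dvd_of_isRelPrime ?_ fun q hq => ?_
  · rintro ⟨k, l⟩ hkl ⟨k', l'⟩ hkl' hne
    simp only [coe_filter, mem_product, Set.mem_ofPred_eq] at hkl hkl'
    have hsame : ¬ (k = k' ∧ l = l') := fun h => hne (Prod.ext h.1 h.2)
    have hflip : ¬ (k = l' ∧ l = k') := fun ⟨h1, h2⟩ => by order
    simp only [Function.onFun, Prod.fst_swap, Prod.snd_swap]
    refine IsRelPrime.mul_left (IsRelPrime.mul_right ?_ ?_) (IsRelPrime.mul_right ?_ ?_) <;>
      exact isRelPrime_X_sub_X (by order) (by order) (by tauto)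
  · simp only [mem_filter, mem_product] at hq
    rw [Prod.fst_swap, Prod.snd_swap, show (X q.1 - X q.2) * (X q.2 - X q.1) =
      -(X q.1 - X q.2 : MvPolynomial σ R) ^ 2 by ring, neg_dvd]
    exact h _ hq.1.1 _ hq.1.2 hq.2

end DiffProdX

theorem halvingDefect_X_eq_zero {σ : Type*} [LinearOrder σ] (m : ℕ) :
    ∀ U : Finset σ, #U = 2 * m → halvingDefect (X : σ → MvPolynomial σ ℤ) U m = 0 := by
  induction m with
  | zero =>
    intro U hU
    rw [card_eq_zero.1 hU]
    simp [halvingDefect, diffProd]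
  | succ m ih =>
    intro U hU
    set Q := halvingDefect (X : σ → MvPolynomial σ ℤ) U (m + 1)
    have hvan : ∀ i ∈ U, ∀ j ∈ U, i ≠ j → rename (Function.update id i j) Q = 0 := by
      intro i hi j hj hij
      have hV : #(U \ {i, j}) = 2 * m := by
        rw [card_sdiff_of_subset (by simp [insert_subset_iff, hi, hj]), card_pair hij, hU]
        omega
      rw [rename_update_halvingDefect_X_succ hi hj hij, ih _ hV, map_zero, mul_zero]
    have hswap : ∀ i ∈ U, ∀ j ∈ U, rename (Equiv.swap i j) Q = Q :=
      fun i hi j hj => rename_swap_halvingDefect_X hi hj _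
    have hdvd : diffProd X U ∣ Q := diffProd_X_dvd fun i hi j hj hij =>
      sq_X_sub_X_dvd hij.ne (hswap i hi j hj) (hvan i hi j hj hij.ne)
    by_contra hQ
    have hdeg := totalDegree_le_of_dvd_of_isDomain hdvd hQ
    rw [(isHomogeneous_diffProd_X U).totalDegree (diffProd_X_ne_zero U),
      (isHomogeneous_halvingDefect_X hU).totalDegree hQ, hU] at hdeg
    have hle : m + 1 ≤ (m + 1) * (m + 1) := Nat.le_mul_of_pos_left _ m.succ_pos
    have hexpand : 2 * (m + 1) * (2 * (m + 1)) = 4 * ((m + 1) * (m + 1)) := by ring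
    rw [hexpand] at hdeg
    generalize (m + 1) * (m + 1) = k at hdeg hle
    omega

theorem halvingDefect_eq_zero {σ S : Type*} [LinearOrder σ] [CommRing S] (x : σ → S)
    {U : Finset σ} {m : ℕ} (hU : #U = 2 * m) : halvingDefect x U m = 0 := by
  have h := congrArg (eval₂Hom (Int.castRingHom S) x) (halvingDefect_X_eq_zero m U hU)
  have hx : ⇑(eval₂Hom (Int.castRingHom S) x) ∘ X = x := by funext k; simp
  rwa [map_halvingDefect, hx, map_zero] at h

lemma diffProd_eq_neg_one_pow_mul_vdm_sq {N : ℕ} (lam : Fin N → ℝ) (A : Finset (Fin N)) :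
    diffProd lam A = (-1) ^ (#A).choose 2 * vdm lam A ^ 2 := by
  rw [diffProd, prod_offDiag_eq_prod_filter_lt, vdm, ← card_product_filter_lt, ← prod_const,
    ← prod_pow, ← prod_mul_distrib]
  exact prod_congr rfl fun p _ => by simp only [Prod.fst_swap, Prod.snd_swap]; ring

theorem statement9_general (n : ℕ) (lam : Fin (2 * n) → ℝ) :
    ∑ A ∈ Finset.powersetCard n (Finset.univ : Finset (Fin (2 * n))),
        vdm lam A ^ 4 * vdm lam Aᶜ ^ 4 =
      ((2 : ℝ) ^ n)⁻¹ *
        (∑ A ∈ Finset.powersetCard n (Finset.univ : Finset (Fin (2 * n))),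
            vdm lam A ^ 2 * vdm lam Aᶜ ^ 2) ^ 2 := by
  have hterm : ∀ A ∈ powersetCard n (univ : Finset (Fin (2 * n))),
      diffProd lam A * diffProd lam (univ \ A) = vdm lam A ^ 2 * vdm lam Aᶜ ^ 2 := by
    intro A hA
    have hA : #A = n := (mem_powersetCard.1 hA).2
    have hAc : #Aᶜ = n := by rw [card_compl, hA, Fintype.card_fin]; omega
    have hsign : ((-1 : ℝ) ^ (n.choose 2)) ^ 2 = 1 := by
      rw [← pow_mul, mul_comm, pow_mul, neg_one_sq, one_pow]
    rw [← compl_eq_univ_sdiff, diffProd_eq_neg_one_pow_mul_vdm_sq,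
      diffProd_eq_neg_one_pow_mul_vdm_sq, hA, hAc]
    linear_combination vdm lam A ^ 2 * vdm lam Aᶜ ^ 2 * hsign
  have key := halvingDefect_eq_zero lam (U := univ) (m := n) (by simp)
  have hsq : ∀ A ∈ powersetCard n (univ : Finset (Fin (2 * n))),
      (diffProd lam A * diffProd lam (univ \ A)) ^ 2 = vdm lam A ^ 4 * vdm lam Aᶜ ^ 4 :=
    fun A hA => by rw [hterm A hA]; ring
  rw [halvingDefect, sum_congr rfl hsq, sum_congr rfl hterm] at key
  rw [eq_inv_mul_iff_mul_eq₀ (by positivity)]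
  linear_combination key

theorem statement9 (n : ℕ) (hn : 2 ≤ n) (lam : Fin (2 * n) → ℝ) :
    ∑ A ∈ Finset.powersetCard n (Finset.univ : Finset (Fin (2 * n))),
        vdm lam A ^ 4 * vdm lam Aᶜ ^ 4 =
      ((2 : ℝ) ^ n)⁻¹ *
        (∑ A ∈ Finset.powersetCard n (Finset.univ : Finset (Fin (2 * n))),
            vdm lam A ^ 2 * vdm lam Aᶜ ^ 2) ^ 2 :=
  statement9_general n lam
end

section
/- Let n ≥ 1 and let λ_1,…,λ_{2n} be distinct real numbers. Let K be the (2n)×(2n) matrix with K_{ij} = 1/(λ_i − λ_j) for i ≠ j and K_{ii} = 0, and let H be the (2n)×(2n) matrix with H_{ij} = 1/(λ_i − λ_j)² for i ≠ j and H_{ii} = 0. Then det(K) = Hf(H). -/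
open scoped BigOperators

/-- The permutations `π_α` of `{1,…,2n}` corresponding to perfect matchings
`α ∈ Π_{2n}` (written 0-based). -/
def matchPerms (n : ℕ) : Finset (Equiv.Perm (Fin (2 * n))) :=
  Finset.univ.filter fun π =>
    (∀ i : Fin n, π ⟨2 * i.val, by have := i.isLt; omega⟩ <
        π ⟨2 * i.val + 1, by have := i.isLt; omega⟩) ∧
      ∀ i j : Fin n, i < j → π ⟨2 * i.val, by have := i.isLt; omega⟩ <
        π ⟨2 * j.val, by have := j.isLt; omega⟩

/-- The Hafnian of a `(2n)×(2n)` matrix: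
`Hf(H) = Σ_{α ∈ Π_{2n}} ∏_{i=1}^n H_{α_{i,1},α_{i,2}}`. -/
def hf {n : ℕ} (H : Matrix (Fin (2 * n)) (Fin (2 * n)) ℝ) : ℝ :=
  ∑ π ∈ matchPerms n,
    ∏ i : Fin n, H (π ⟨2 * i.val, by have := i.isLt; omega⟩)
      (π ⟨2 * i.val + 1, by have := i.isLt; omega⟩)


/-!
Both sides satisfy the same recursion, obtained by pairing the point `0` with each other point
`r + 1`. For the Hafnian this is the splitting of a perfect matching into the pair containing `0`
and a perfect matching of the remaining `2n` points. For the determinant, Laplace expansion along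
column `0` and then row `0` gives `∑ᵣ ∑ⱼ ± cᵣ cⱼ Mᵣⱼ` with `cᵣ = K_{r+1,0}`; the identity
`cᵣ cⱼ = K_{r+1,j+1} (cⱼ - cᵣ)` for `r ≠ j` kills the off-diagonal terms and leaves
`∑ᵣ cᵣ² det K'ᵣ`, where `K'ᵣ` is `K` with rows and columns `0, r + 1` deleted. As `cᵣ² = H_{0,r+1}`
and the deleted matrices are again of the same shape, induction on `n` finishes.
-/

open Finset

namespace Matrix

theorem submatrix_of_ite_eq {α β R : Type*} [Zero R] [DecidableEq α] [DecidableEq β]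
    (f : α → α → R) {e : β → α} (he : Function.Injective e) :
    (of fun i j => if i = j then 0 else f i j).submatrix e e =
      of fun i j => if i = j then 0 else f (e i) (e j) := by
  ext i j
  simp [he.eq_iff]

variable {R : Type*} [CommRing R] {m : ℕ}

theorem det_eq_sum_sum_mul_det_submatrix (A : Matrix (Fin (m + 2)) (Fin (m + 2)) R)
    (h00 : A 0 0 = 0) (h0 : ∀ j : Fin (m + 1), A 0 j.succ = -A j.succ 0) :
    A.det = ∑ r : Fin (m + 1), ∑ j : Fin (m + 1), (-1) ^ (r + j : ℕ) * (A r.succ 0 * A j.succ 0) *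
      (A.submatrix (Fin.succ ∘ r.succAbove) (Fin.succ ∘ j.succAbove)).det := by
  rw [det_succ_column_zero, Fin.sum_univ_succ, h00, mul_zero, zero_mul, zero_add]
  refine sum_congr rfl fun r _ => ?_
  rw [det_succ_row_zero, mul_sum]
  refine sum_congr rfl fun j _ => ?_
  have hcomp : r.succ.succAbove ∘ Fin.succ = Fin.succ ∘ r.succAbove :=
    funext (Fin.succ_succAbove_succ r)
  simp only [submatrix_apply, submatrix_submatrix, Fin.succ_succAbove_zero, h0, Fin.val_succ,
    hcomp]
  ring

theorem det_eq_sum_sq_mul_det_submatrix (A : Matrix (Fin (m + 2)) (Fin (m + 2)) R)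
    (h00 : A 0 0 = 0) (h0 : ∀ j : Fin (m + 1), A 0 j.succ = -A j.succ 0)
    (hcauchy : ∀ r j : Fin (m + 1), r ≠ j →
      A r.succ 0 * A j.succ 0 = A r.succ j.succ * (A j.succ 0 - A r.succ 0)) :
    A.det = ∑ r : Fin (m + 1), A r.succ 0 ^ 2 *
      (A.submatrix (Fin.succ ∘ r.succAbove) (Fin.succ ∘ r.succAbove)).det := by
  simp only [det_eq_sum_sum_mul_det_submatrix A h00 h0, ← submatrix_submatrix]
  set B := A.submatrix Fin.succ Fin.succ
  -- Summed over `r` and `j`, the last two terms cancel: by Laplace expansion of `B` along a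
  -- column, resp. a row, both sums equal `(∑ i, A i.succ 0) * det B`.
  have hterm : ∀ r j : Fin (m + 1),
      (-1) ^ (r + j : ℕ) * (A r.succ 0 * A j.succ 0) * (B.submatrix r.succAbove j.succAbove).det =
        (if r = j then A r.succ 0 ^ 2 * (B.submatrix r.succAbove r.succAbove).det else 0) +
        A j.succ 0 * ((-1) ^ (r + j : ℕ) * B r j * (B.submatrix r.succAbove j.succAbove).det) -
        A r.succ 0 * ((-1) ^ (r + j : ℕ) * B r j * (B.submatrix r.succAbove j.succAbove).det) := by
    intro r j
    by_cases h : r = j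
    · subst h
      rw [if_pos rfl, Even.neg_one_pow ⟨r, rfl⟩]
      ring
    · rw [if_neg h, hcauchy r j h]
      simp only [B, submatrix_apply]
      ring
  simp_rw [hterm, sum_sub_distrib, sum_add_distrib, sum_ite_eq, mem_univ, if_true, ← mul_sum,
    ← det_succ_row B]
  rw [sum_comm]
  simp_rw [← mul_sum, ← det_succ_column B]
  ring

end Matrix

section Hafnian

variable {n : ℕ}

def pairFst (i : Fin n) : Fin (2 * n) := ⟨2 * i, by omega⟩

def pairSnd (i : Fin n) : Fin (2 * n) := ⟨2 * i + 1, by omega⟩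

theorem mem_matchPerms {π : Equiv.Perm (Fin (2 * n))} :
    π ∈ matchPerms n ↔ (∀ i, π (pairFst i) < π (pairSnd i)) ∧ StrictMono (π ∘ pairFst) := by
  simp [matchPerms]; rfl

theorem hf_def (H : Matrix (Fin (2 * n)) (Fin (2 * n)) ℝ) :
    hf H = ∑ π ∈ matchPerms n, ∏ i, H (π (pairFst i)) (π (pairSnd i)) := rfl

@[simp] theorem pairFst_zero : pairFst (0 : Fin (n + 1)) = 0 := rfl
@[simp] theorem pairSnd_zero : pairSnd (0 : Fin (n + 1)) = 1 := rfl
@[simp] theorem pairFst_succ (i : Fin n) : pairFst i.succ = (pairFst i).succ.succ := by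
  ext; simp [pairFst]; ring
@[simp] theorem pairSnd_succ (i : Fin n) : pairSnd i.succ = (pairSnd i).succ.succ := by
  ext; simp [pairSnd]; ring

/-- The matching `{0, r + 1}` together with the matching `σ` moved onto the remaining points in
increasing order. -/
noncomputable def extendMatch (r : Fin (2 * n + 1)) (σ : Equiv.Perm (Fin (2 * n))) :
    Equiv.Perm (Fin (2 * (n + 1))) :=
  Equiv.ofBijective (Fin.cons 0 (Fin.cons r.succ (Fin.succ ∘ r.succAbove ∘ σ))) <| by
    refine Finite.injective_iff_bijective.mp ?_
    simp only [Fin.cons_injective_iff, Fin.range_cons]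
    refine ⟨?_, ?_, (Fin.succ_injective _).comp (Fin.succAbove_right_injective.comp σ.injective)⟩
    · simp [eq_comm, (Fin.succ_ne_zero _).symm]
    · simp

variable (r : Fin (2 * n + 1)) (σ : Equiv.Perm (Fin (2 * n)))

@[simp] theorem extendMatch_zero : extendMatch r σ 0 = 0 := rfl

@[simp] theorem extendMatch_one : extendMatch r σ 1 = r.succ := rfl

@[simp] theorem extendMatch_succ_succ (k : Fin (2 * n)) :
    extendMatch r σ k.succ.succ = (r.succAbove (σ k)).succ := rfl

theorem extendMatch_comp_pairFst :
    extendMatch r σ ∘ pairFst = Fin.cons 0 (Fin.succ ∘ r.succAbove ∘ σ ∘ pairFst) := by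
  funext i
  cases i using Fin.cases <;> simp

theorem extendMatch_mem_matchPerms_iff :
    extendMatch r σ ∈ matchPerms (n + 1) ↔ σ ∈ matchPerms n := by
  rw [mem_matchPerms, mem_matchPerms, extendMatch_comp_pairFst, Fin.strictMono_cons,
    Fin.forall_fin_succ]
  simp [StrictMono, Fin.succ_pos]

theorem extendMatch_inj {r r' : Fin (2 * n + 1)} {σ σ' : Equiv.Perm (Fin (2 * n))} :
    extendMatch r σ = extendMatch r' σ' ↔ r = r' ∧ σ = σ' := by
  refine ⟨fun h => ?_, fun ⟨hr, hσ⟩ => hr ▸ hσ ▸ rfl⟩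
  have hr : r = r' := by simpa using DFunLike.congr_fun h 1
  subst hr
  refine ⟨rfl, Equiv.ext fun k => ?_⟩
  exact Fin.succAbove_right_injective (Fin.succ_injective _ (DFunLike.congr_fun h k.succ.succ))

theorem exists_eq_pairFst_or_pairSnd (k : Fin (2 * n)) : ∃ i, k = pairFst i ∨ k = pairSnd i :=
  ⟨⟨k / 2, by omega⟩, by simp only [pairFst, pairSnd, Fin.ext_iff]; omega⟩

theorem apply_zero_of_mem_matchPerms {π : Equiv.Perm (Fin (2 * (n + 1)))}
    (hπ : π ∈ matchPerms (n + 1)) : π 0 = 0 := by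
  obtain ⟨hlt, hmono⟩ := mem_matchPerms.1 hπ
  have hmin : ∀ k, π 0 ≤ π k := by
    intro k
    obtain ⟨i, rfl | rfl⟩ := exists_eq_pairFst_or_pairSnd k
    · exact hmono.monotone (Fin.zero_le i)
    · exact (hmono.monotone (Fin.zero_le i)).trans (hlt i).le
  simpa using hmin (π.symm 0)

theorem exists_extendMatch_eq {π : Equiv.Perm (Fin (2 * (n + 1)))}
    (hπ : π ∈ matchPerms (n + 1)) : ∃ r σ, extendMatch r σ = π := by
  have h0 := apply_zero_of_mem_matchPerms hπ
  obtain ⟨r, hr⟩ : ∃ r : Fin (2 * n + 1), r.succ = π 1 :=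
    Fin.exists_succ_eq.2 fun h => one_ne_zero (π.injective (h.trans h0.symm))
  have hrest : ∀ k : Fin (2 * n), ∃ j, (r.succAbove j).succ = π k.succ.succ := by
    intro k
    obtain ⟨y, hy⟩ : ∃ y : Fin (2 * n + 1), y.succ = π k.succ.succ :=
      Fin.exists_succ_eq.2 fun h => Fin.succ_ne_zero _ (π.injective (h.trans h0.symm))
    obtain ⟨j, rfl⟩ := Fin.exists_succAbove_eq fun h : y = r => by
      have := π.injective ((hy.symm.trans (congrArg Fin.succ h)).trans hr)
      simp [Fin.ext_iff] at this
    exact ⟨j, hy⟩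
  choose f hf using hrest
  have hinj : Function.Injective f := fun k l h =>
    Fin.succ_injective _ (Fin.succ_injective _ (π.injective (by rw [← hf, ← hf, h])))
  refine ⟨r, Equiv.ofBijective f (Finite.injective_iff_bijective.1 hinj), Equiv.ext fun k => ?_⟩
  refine Fin.cases ?_ (Fin.cases ?_ fun k => ?_) k
  · exact h0.symm
  · exact hr
  · exact hf k

theorem matchPerms_succ :
    matchPerms (n + 1) = (univ ×ˢ matchPerms n).image fun p => extendMatch p.1 p.2 := by
  ext π
  simp only [mem_image, mem_product, mem_univ, true_and, Prod.exists]
  constructor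
  · intro hπ
    obtain ⟨r, σ, rfl⟩ := exists_extendMatch_eq hπ
    exact ⟨r, σ, (extendMatch_mem_matchPerms_iff r σ).1 hπ, rfl⟩
  · rintro ⟨r, σ, hσ, rfl⟩
    exact (extendMatch_mem_matchPerms_iff r σ).2 hσ

theorem hf_succ (H : Matrix (Fin (2 * (n + 1))) (Fin (2 * (n + 1))) ℝ) :
    hf H = ∑ r : Fin (2 * n + 1),
      H 0 r.succ * hf (H.submatrix (Fin.succ ∘ r.succAbove) (Fin.succ ∘ r.succAbove)) := by
  rw [hf_def, matchPerms_succ, sum_image fun p _ q _ h => Prod.ext_iff.2 (extendMatch_inj.1 h),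
    sum_product]
  refine sum_congr rfl fun r _ => ?_
  rw [hf_def, mul_sum]
  refine sum_congr rfl fun σ _ => ?_
  rw [Fin.prod_univ_succ]
  simp

theorem hf_zero (H : Matrix (Fin (2 * 0)) (Fin (2 * 0)) ℝ) : hf H = 1 := by
  simp [hf, matchPerms]

end Hafnian

theorem one_div_sub_mul_one_div_sub {K : Type*} [Field K] {a b c : K} (hab : a ≠ b) (hac : a ≠ c)
    (hbc : b ≠ c) : 1 / (a - c) * (1 / (b - c)) = 1 / (a - b) * (1 / (b - c) - 1 / (a - c)) := by
  have := sub_ne_zero.2 hab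
  have := sub_ne_zero.2 hac
  have := sub_ne_zero.2 hbc
  field_simp
  ring

theorem statement12_general (n : ℕ) (lam : Fin (2 * n) → ℝ)
    (hlam : Function.Injective lam) :
    (Matrix.of fun i j : Fin (2 * n) =>
        if i = j then (0 : ℝ) else 1 / (lam i - lam j)).det =
      hf (Matrix.of fun i j => if i = j then 0 else 1 / (lam i - lam j) ^ 2) := by
  induction n with
  | zero => simp [hf_zero]
  | succ n ih =>
    rw [Matrix.det_eq_sum_sq_mul_det_submatrix (m := 2 * n) _ (by simp) ?_ ?_, hf_succ]
    · refine sum_congr rfl fun r _ => ?_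
      have he : Function.Injective (Fin.succ ∘ r.succAbove : Fin (2 * n) → Fin (2 * (n + 1))) :=
        (Fin.succ_injective _).comp Fin.succAbove_right_injective
      rw [Matrix.submatrix_of_ite_eq (fun a b => 1 / (lam a - lam b)) he,
        Matrix.submatrix_of_ite_eq (fun a b => 1 / (lam a - lam b) ^ 2) he]
      refine congrArg₂ (· * ·) ?_ (ih _ (hlam.comp he))
      simp [(Fin.succ_ne_zero r).symm]
      ring
    · intro j
      simp only [Matrix.of_apply, if_neg (Fin.succ_ne_zero j), if_neg (Fin.succ_ne_zero j).symm]
      rw [← neg_sub, one_div_neg_eq_neg_one_div]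
    · intro i j hij
      simp only [Matrix.of_apply, if_neg (Fin.succ_ne_zero i), if_neg (Fin.succ_ne_zero j),
        if_neg ((Fin.succ_injective _).ne hij)]
      exact one_div_sub_mul_one_div_sub (hlam.ne ((Fin.succ_injective _).ne hij))
        (hlam.ne (Fin.succ_ne_zero i)) (hlam.ne (Fin.succ_ne_zero j))

theorem statement12 (n : ℕ) (hn : 1 ≤ n) (lam : Fin (2 * n) → ℝ)
    (hlam : Function.Injective lam) :
    (Matrix.of fun i j : Fin (2 * n) =>
        if i = j then (0 : ℝ) else 1 / (lam i - lam j)).det =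
      hf (Matrix.of fun i j => if i = j then 0 else 1 / (lam i - lam j) ^ 2) :=
  statement12_general n lam hlam
end

section
/- Let n ≥ 1, let λ_1,…,λ_{2n} be real numbers, and let A ⊆ {1,…,2n} with |A| = n. Then Δ(λ) = (−1)ⁿ · sgn(σ_A) · Δ(A) Δ(A') Θ(A, A'), where Δ(λ) = ∏_{1 ≤ i < j ≤ 2n} (λ_j − λ_i), A' is the complement of A in {1,…,2n}, and Θ(A, A') = ∏_{s ∈ A} ∏_{t ∈ A'} (λ_s − λ_t). -/
open scoped BigOperators

/-- the `a`-th smallest element (0-based) of a finite set of indices, with default `d`. -/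
def kth {N : ℕ} (A : Finset (Fin N)) (d : Fin N) (a : ℕ) : Fin N :=
  (A.sort (· ≤ ·)).getD a d

/-- The map underlying the permutation `σ_A` of `{1,…,2n}`: it sends `i` to the `i`-th
smallest element of `A` and `n+i` to the `i`-th smallest element of `Aᶜ` (0-based). -/
def sigmaSet (n : ℕ) (A : Finset (Fin (2 * n))) : Fin (2 * n) → Fin (2 * n) :=
  fun k => if k.val < n then kth A k k.val else kth Aᶜ k (k.val - n)

/-- The sign of a self-map of `Fin N`, as `(−1)` to the number of inversions; for a
permutation this is the usual sign `sgn`. -/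
def invSign {N : ℕ} (f : Fin N → Fin N) : ℝ :=
  (-1 : ℝ) ^ ((Finset.univ.filter fun p : Fin N × Fin N => p.1 < p.2 ∧ f p.2 < f p.1).card)

/-!
Split the pairs `i < j` in `Δ(λ)` by membership in `A`: the pairs inside `A` and inside `A'`
give `Δ(A) Δ(A')`, and the mixed pairs give `P = ∏_{s ∈ A, t ∈ A', s < t} (λ_t − λ_s)` and
`Q = ∏_{t ∈ A', s ∈ A, t < s} (λ_s − λ_t)`. Up to the sign `(−1)^c`, where `c` counts the pairs
`(s, t) ∈ A × A'` with `s < t`, `Θ(A, A')` is `P Q`. Since `σ_A` is increasing on each half, its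
inversions are the pairs `(i, n + j)` with `σ_A(n + j) < σ_A(i)`, so they match the `c' = n² − c`
pairs `(s, t) ∈ A × A'` with `t < s`. Hence `sgn σ_A = (−1)^{c'}`, and the total sign
`(−1)^{n + c + c'} = (−1)^{n(n+1)}` equals `1`.
-/

open Finset

section CrossVandermonde

variable {ι R : Type*} [LinearOrder ι] [CommRing R]

def crossVdm (lam : ι → R) (A B : Finset ι) : R :=
  ∏ p ∈ (A ×ˢ B).filter fun p => p.1 < p.2, (lam p.2 - lam p.1)

lemma crossVdm_union_left (lam : ι → R) {A A' : Finset ι} (h : Disjoint A A') (B : Finset ι) :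
    crossVdm lam (A ∪ A') B = crossVdm lam A B * crossVdm lam A' B := by
  rw [crossVdm, union_product, filter_union,
    prod_union (disjoint_filter_filter (disjoint_product.2 (Or.inl h)))]
  rfl

lemma crossVdm_union_right (lam : ι → R) (A : Finset ι) {B B' : Finset ι} (h : Disjoint B B') :
    crossVdm lam A (B ∪ B') = crossVdm lam A B * crossVdm lam A B' := by
  rw [crossVdm, product_union, filter_union,
    prod_union (disjoint_filter_filter (disjoint_product.2 (Or.inr h)))]
  rfl

lemma crossVdm_union_union (lam : ι → R) {A B : Finset ι} (h : Disjoint A B) :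
    crossVdm lam (A ∪ B) (A ∪ B) =
      crossVdm lam A A * crossVdm lam B B * (crossVdm lam A B * crossVdm lam B A) := by
  rw [crossVdm_union_left lam h, crossVdm_union_right lam _ h, crossVdm_union_right lam _ h]
  ring

lemma filter_not_lt_eq_filter_gt_of_disjoint {A B : Finset ι} (h : Disjoint A B) :
    ((A ×ˢ B).filter fun p => ¬ p.1 < p.2) = (A ×ˢ B).filter fun p => p.2 < p.1 := by
  refine filter_congr fun p hp => ?_
  have hne : p.1 ≠ p.2 := disjoint_iff_ne.1 h _ (mem_product.1 hp).1 _ (mem_product.1 hp).2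
  rw [not_lt, le_iff_lt_or_eq, or_iff_left hne.symm]

lemma card_filter_lt_add_card_filter_gt {A B : Finset ι} (h : Disjoint A B) :
    ((A ×ˢ B).filter fun p => p.1 < p.2).card + ((A ×ˢ B).filter fun p => p.2 < p.1).card =
      A.card * B.card := by
  rw [← filter_not_lt_eq_filter_gt_of_disjoint h, card_filter_add_card_filter_not, card_product]

lemma crossVdm_swap (lam : ι → R) {A B : Finset ι} (h : Disjoint A B) :
    crossVdm lam B A = ∏ p ∈ (A ×ˢ B).filter fun p => ¬ p.1 < p.2, (lam p.1 - lam p.2) := by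
  rw [filter_not_lt_eq_filter_gt_of_disjoint h, crossVdm]
  exact prod_equiv (Equiv.prodComm ι ι) (by simp [and_comm]) (fun _ _ => rfl)

lemma prod_prod_sub_eq_neg_one_pow_mul_crossVdm (lam : ι → R) {A B : Finset ι}
    (h : Disjoint A B) :
    ∏ s ∈ A, ∏ t ∈ B, (lam s - lam t) =
      (-1) ^ ((A ×ˢ B).filter fun p => p.1 < p.2).card *
        (crossVdm lam A B * crossVdm lam B A) := by
  have hlt : ∏ p ∈ (A ×ˢ B).filter (fun p => p.1 < p.2), (lam p.1 - lam p.2) =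
      (-1) ^ ((A ×ˢ B).filter fun p => p.1 < p.2).card * crossVdm lam A B := by
    rw [crossVdm, ← prod_const, ← prod_mul_distrib]
    exact prod_congr rfl fun _ _ => by ring
  rw [← prod_product' (f := fun s t => lam s - lam t),
    ← prod_filter_mul_prod_filter_not _ (fun p => p.1 < p.2), hlt, crossVdm_swap lam h]
  ring

end CrossVandermonde

section Shuffle

variable {n : ℕ} {A : Finset (Fin (2 * n))}

lemma card_compl_of_card_eq (hA : A.card = n) : Aᶜ.card = n := by
  rw [card_compl, hA, Fintype.card_fin]; omega

lemma kth_eq_orderEmbOfFin {N m : ℕ} {B : Finset (Fin N)} (hB : B.card = m) (d : Fin N)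
    (i : Fin m) : kth B d i = B.orderEmbOfFin hB i := by
  have hi : (i : ℕ) < (B.sort (· ≤ ·)).length := by simp [hB]
  rw [kth, List.getD_eq_getElem _ _ hi, orderEmbOfFin_apply]
  rfl

lemma sigmaSet_of_lt (hA : A.card = n) (k : Fin (2 * n)) (hk : k.val < n) :
    sigmaSet n A k = A.orderEmbOfFin hA ⟨k, hk⟩ := by
  rw [sigmaSet, if_pos hk, ← kth_eq_orderEmbOfFin hA k ⟨k, hk⟩]

lemma sigmaSet_of_le (hA : A.card = n) (k : Fin (2 * n)) (hk : n ≤ k.val) :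
    sigmaSet n A k = Aᶜ.orderEmbOfFin (card_compl_of_card_eq hA) ⟨k - n, by omega⟩ := by
  rw [sigmaSet, if_neg (by omega), ← kth_eq_orderEmbOfFin _ k ⟨k - n, _⟩]

lemma sigmaSet_inversion_straddles (hA : A.card = n) {k l : Fin (2 * n)} (hkl : k < l)
    (hσ : sigmaSet n A l < sigmaSet n A k) : k.val < n ∧ n ≤ l.val := by
  have hkl' : k.val < l.val := hkl
  by_contra hcon
  rcases Nat.lt_or_ge l.val n with hl | hl
  · rw [sigmaSet_of_lt hA k (by omega), sigmaSet_of_lt hA l hl] at hσ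
    exact (A.orderEmbOfFin hA).strictMono.lt_iff_lt.1 hσ |>.not_gt hkl'
  · rw [sigmaSet_of_le hA k (by omega), sigmaSet_of_le hA l hl] at hσ
    have := (Aᶜ.orderEmbOfFin _).strictMono.lt_iff_lt.1 hσ
    rw [Fin.mk_lt_mk] at this
    omega

lemma sigmaSet_mk (hA : A.card = n) (i : Fin n) :
    sigmaSet n A ⟨i, by omega⟩ = A.orderEmbOfFin hA i :=
  sigmaSet_of_lt hA _ i.isLt

lemma sigmaSet_mk_add (hA : A.card = n) (j : Fin n) :
    sigmaSet n A ⟨n + j, by omega⟩ = Aᶜ.orderEmbOfFin (card_compl_of_card_eq hA) j := by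
  rw [sigmaSet_of_le hA _ (Nat.le_add_right n j)]
  simp only [Nat.add_sub_cancel_left]

lemma card_inversions_sigmaSet (hA : A.card = n) :
    (univ.filter fun p : Fin (2 * n) × Fin (2 * n) =>
        p.1 < p.2 ∧ sigmaSet n A p.2 < sigmaSet n A p.1).card =
      (univ.filter fun q : Fin n × Fin n =>
        Aᶜ.orderEmbOfFin (card_compl_of_card_eq hA) q.2 < A.orderEmbOfFin hA q.1).card := by
  symm
  apply card_nbij fun q : Fin n × Fin n =>
    ((⟨q.1, by omega⟩ : Fin (2 * n)), (⟨n + q.2, by omega⟩ : Fin (2 * n)))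
  · intro q hq
    simp only [coe_filter, mem_univ, true_and, Set.mem_ofPred_eq] at hq ⊢
    rw [sigmaSet_mk hA, sigmaSet_mk_add hA, Fin.mk_lt_mk]
    exact ⟨by omega, hq⟩
  · intro q _ q' _ h
    simp only [Prod.mk.injEq, Fin.mk.injEq] at h
    exact Prod.ext (Fin.ext h.1) (Fin.ext (by omega))
  · rintro ⟨k, l⟩ hp
    simp only [coe_filter, mem_univ, true_and, Set.mem_ofPred_eq] at hp
    obtain ⟨hk, hl⟩ := sigmaSet_inversion_straddles hA hp.1 hp.2
    refine ⟨(⟨k, hk⟩, ⟨l - n, by omega⟩), ?_, ?_⟩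
    · have hσ := hp.2
      rw [sigmaSet_of_lt hA k hk, sigmaSet_of_le hA l hl] at hσ
      simpa using hσ
    · exact Prod.ext rfl (Fin.ext (by simp only; omega))

lemma card_filter_orderEmbOfFin_lt (hA : A.card = n) :
    (univ.filter fun q : Fin n × Fin n =>
        Aᶜ.orderEmbOfFin (card_compl_of_card_eq hA) q.2 < A.orderEmbOfFin hA q.1).card =
      ((A ×ˢ Aᶜ).filter fun p => p.2 < p.1).card := by
  apply card_nbij fun q =>
    (A.orderEmbOfFin hA q.1, Aᶜ.orderEmbOfFin (card_compl_of_card_eq hA) q.2)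
  · intro q hq
    simp only [coe_filter, mem_univ, true_and, Set.mem_ofPred_eq, mem_product] at hq ⊢
    exact ⟨⟨orderEmbOfFin_mem _ _ _, orderEmbOfFin_mem _ _ _⟩, hq⟩
  · intro q _ q' _ h
    simp only [Prod.mk.injEq, EmbeddingLike.apply_eq_iff_eq] at h
    exact Prod.ext h.1 h.2
  · rintro ⟨s, t⟩ hp
    simp only [coe_filter, mem_product, Set.mem_ofPred_eq] at hp
    obtain ⟨i, rfl⟩ : s ∈ Set.range (A.orderEmbOfFin hA) := by
      rw [range_orderEmbOfFin]; exact hp.1.1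
    obtain ⟨j, rfl⟩ : t ∈ Set.range (Aᶜ.orderEmbOfFin (card_compl_of_card_eq hA)) := by
      rw [range_orderEmbOfFin]; exact hp.1.2
    exact ⟨(i, j), by simpa using hp.2, rfl⟩

lemma invSign_sigmaSet (hA : A.card = n) :
    invSign (sigmaSet n A) = (-1) ^ ((A ×ˢ Aᶜ).filter fun p => p.2 < p.1).card := by
  rw [invSign, card_inversions_sigmaSet hA, card_filter_orderEmbOfFin_lt hA]

end Shuffle

theorem statement17_general (n : ℕ) (lam : Fin (2 * n) → ℝ)
    (A : Finset (Fin (2 * n))) (hA : A.card = n) :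
    vdm lam Finset.univ =
      (-1 : ℝ) ^ n * invSign (sigmaSet n A) *
        (vdm lam A * vdm lam Aᶜ * ∏ s ∈ A, ∏ t ∈ Aᶜ, (lam s - lam t)) := by
  have hdisj : Disjoint A Aᶜ := disjoint_compl_right
  set c := ((A ×ˢ Aᶜ).filter fun p => p.1 < p.2).card
  set c' := ((A ×ˢ Aᶜ).filter fun p => p.2 < p.1).card
  have hsign : (-1 : ℝ) ^ n * (-1) ^ c' * (-1) ^ c = 1 := by
    have hcard : c + c' = n * n := by
      rw [card_filter_lt_add_card_filter_gt hdisj, hA, card_compl_of_card_eq hA]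
    have hparity : n + c' + c = n * (n + 1) := by rw [Nat.mul_succ]; omega
    rw [← pow_add, ← pow_add, hparity, (Nat.even_mul_succ_self n).neg_one_pow]
  have hsplit : vdm lam univ =
      vdm lam A * vdm lam Aᶜ * (crossVdm lam A Aᶜ * crossVdm lam Aᶜ A) := by
    rw [← union_compl A]
    exact crossVdm_union_union lam hdisj
  rw [hsplit, invSign_sigmaSet hA, prod_prod_sub_eq_neg_one_pow_mul_crossVdm lam hdisj]
  linear_combination
    (-(vdm lam A * vdm lam Aᶜ * (crossVdm lam A Aᶜ * crossVdm lam Aᶜ A))) * hsign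

theorem statement17 (n : ℕ) (hn : 1 ≤ n) (lam : Fin (2 * n) → ℝ)
    (A : Finset (Fin (2 * n))) (hA : A.card = n) :
    vdm lam Finset.univ =
      (-1 : ℝ) ^ n * invSign (sigmaSet n A) *
        (vdm lam A * vdm lam Aᶜ * ∏ s ∈ A, ∏ t ∈ Aᶜ, (lam s - lam t)) :=
  statement17_general n lam A hA
end

section
/- Let n ≥ 1, let λ_1,…,λ_{2n} be distinct real numbers, and let σ, τ be two distinct permutations of {1,…,n}. Then Σ_f ∏_{i=1}^n [ 1/((λ_{f(i)} − λ_{g(σ(i))}) · (λ_{f(i)} − λ_{g(τ(i))})) ] = 0, where the sum is over all ways to choose 2n distinct values f(1),…,f(n), g(1),…,g(n) with {f(1),…,f(n), g(1),…,g(n)} = {1,…,2n} (equivalently, over all bijections from the disjoint union {1,…,n} ⊔ {1,…,n} onto {1,…,2n}, with f the restriction to the first copy and g the restriction to the second copy). -/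
/-!
Put `θ (inl i) = inr (σ i)` and `θ (inr j) = inl (τ⁻¹ j)`. Up to the sign `(-1)^n`, the summand
is `∏ s, 1 / (λ (e s) - λ (e (θ s)))`, a product over the edges of the cycles of `θ`, and since
`σ ≠ τ` one of these cycles has length at least three. Averaging over the rearrangements of `e`
along that cycle reduces the claim to the vanishing of the cyclic sum
`∑ v, ∏ t, 1 / (x (v t) - x (v (t + 1)))` over all arrangements `v` of `L ≥ 3` distinct numbers
around a cycle. Fixing the starting point `c` turns the cyclic sum into a sum over paths from
`x c` back to `x c`, and by induction on the number of points, with Lagrange interpolation of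
`(X - b) ^ k`, the sum over all paths from `a` to `b` through `k + 1` points `y c` is
`(a - b) ^ k / ∏ c, (a - y c) * (y c - b)`, which vanishes when `a = b` and `k ≥ 1`.
-/

open Finset Polynomial Function

theorem Lagrange.eval_eq_eval_nodal_mul_sum {F ι : Type*} [Field F] [DecidableEq ι]
    {s : Finset ι} {v : ι → F} (hvs : Set.InjOn v s) {p : F[X]} (hp : p.degree < #s) {x : F}
    (hx : ∀ i ∈ s, x ≠ v i) :
    p.eval x = (Lagrange.nodal s v).eval x *
      ∑ i ∈ s, Lagrange.nodalWeight s v i * (x - v i)⁻¹ * p.eval (v i) := by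
  conv_lhs => rw [Lagrange.eq_interpolate hvs hp]
  exact Lagrange.eval_interpolate_not_at_node _ hx

theorem sum_eq_zero_of_forall_sum_perm_apply_eq_zero {ι X K : Type*} [Fintype ι] [Nonempty ι]
    [Fintype X] [Semiring K] [NoZeroDivisors K] [CharZero K] (π : ι → Equiv.Perm X)
    {F : X → K} (h : ∀ x, ∑ i, F (π i x) = 0) : ∑ x, F x = 0 := by
  have : (Fintype.card ι : K) * ∑ x, F x = 0 := calc
    _ = ∑ i, ∑ x, F (π i x) := by simp [Equiv.sum_comp]
    _ = 0 := by rw [sum_comm]; exact sum_eq_zero fun x _ => h x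
  exact (mul_eq_zero.mp this).resolve_left (by simp)

lemma Equiv.Perm.prod_viaFintypeEmbedding {α ι M : Type*} [Fintype α] [DecidableEq α]
    [Fintype ι] [CommMonoid M] {θ : Equiv.Perm α} {θ' : Equiv.Perm ι} {E : ι ↪ α}
    (hE : ∀ t, θ (E t) = E (θ' t)) (ρ : Equiv.Perm ι) (g : α → α → M) :
    ∏ s, g (ρ.viaFintypeEmbedding E s) (ρ.viaFintypeEmbedding E (θ s)) =
      (∏ t, g (E (ρ t)) (E (ρ (θ' t)))) * ∏ s ∈ (univ.map E)ᶜ, g s (θ s) := by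
  have hθ : ∀ s ∉ Set.range E, θ s ∉ Set.range E := by
    rintro s hs ⟨t, ht⟩
    refine hs ⟨θ'.symm t, θ.injective ?_⟩
    rw [hE, Equiv.apply_symm_apply, ht]
  rw [← prod_mul_prod_compl (univ.map E), prod_map]
  congr 1
  · simp [hE]
  · refine prod_congr rfl fun s hs => ?_
    have hs' : s ∉ Set.range E := by simpa using hs
    rw [viaFintypeEmbedding_apply_notMem_range _ _ hs',
      viaFintypeEmbedding_apply_notMem_range _ _ (hθ s hs')]

lemma Equiv.Perm.exists_cycle_enumeration {α : Type*} [Finite α] (θ : Equiv.Perm α) {s : α}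
    (h1 : θ s ≠ s) (h2 : θ (θ s) ≠ s) :
    ∃ (m : ℕ) (E : Fin (m + 3) ↪ α), ∀ t, θ (E t) = E (t + 1) := by
  set L := minimalPeriod θ s with hL
  have hL0 : 0 < L := minimalPeriod_pos_of_mem_periodicPts (θ.injective.mem_periodicPts s)
  have hL1 : L ≠ 1 := by rw [Ne, hL, minimalPeriod_eq_one_iff_isFixedPt]; exact h1
  have hL2 : L ≠ 2 := fun h => h2 (by
    simpa [← hL, h] using iterate_minimalPeriod (f := θ) (x := s))
  obtain ⟨m, hm⟩ : ∃ m, L = m + 3 := ⟨L - 3, by omega⟩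
  have hinj : Injective fun t : Fin (m + 3) => θ^[t] s := fun t t' h =>
    Fin.ext (iterate_injOn_Iio_minimalPeriod (by simp [← hL, hm]) (by simp [← hL, hm]) h)
  refine ⟨m, ⟨_, hinj⟩, fun t => ?_⟩
  simp only [Function.Embedding.coeFn_mk]
  rw [← iterate_succ_apply' θ, ← iterate_mod_minimalPeriod_eq, ← hL, hm, Fin.val_add]
  simp

section Arrangements

variable {γ : Type*} [DecidableEq γ] {k : ℕ}

def Equiv.finSuccEquivSigmaNe : (Fin (k + 1) ≃ γ) ≃ Σ c : γ, (Fin k ≃ {d // d ≠ c}) :=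
  ((finSuccEquiv k).equivCongr (Equiv.refl γ)).trans
    ((Equiv.sigmaFiberEquiv fun e : Option (Fin k) ≃ γ => e none).symm.trans
      (Equiv.sigmaCongrRight fun c => Equiv.optionSubtype c))

def finConsEquiv (c : γ) (w : Fin k ≃ {d // d ≠ c}) : Fin (k + 1) ≃ γ :=
  Equiv.finSuccEquivSigmaNe.symm ⟨c, w⟩

lemma comp_finConsEquiv {K : Type*} (x : γ → K) (c : γ) (w : Fin k ≃ {d // d ≠ c}) :
    x ∘ finConsEquiv c w = Fin.cons (x c) fun t => x (w t) := by
  ext t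
  cases t using Fin.cases <;> rfl

lemma sum_finConsEquiv [Fintype γ] {M : Type*} [AddCommMonoid M] (F : (Fin (k + 1) ≃ γ) → M) :
    ∑ w, F w = ∑ c, ∑ w : Fin k ≃ {d // d ≠ c}, F (finConsEquiv c w) := by
  rw [← Equiv.finSuccEquivSigmaNe.symm.sum_comp F]
  exact Fintype.sum_sigma fun p => F (Equiv.finSuccEquivSigmaNe.symm p)

lemma Fintype.card_subtype_ne [Fintype γ] (hγ : Fintype.card γ = k + 1) (c : γ) :
    Fintype.card {d // d ≠ c} = k := by
  simp [Fintype.card_subtype_compl, hγ]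

end Arrangements

variable {K : Type*} [Field K]

def pathProd {m : ℕ} (z : Fin (m + 1) → K) : K :=
  ∏ t : Fin m, (z t.castSucc - z t.succ)⁻¹

lemma pathProd_cons {m : ℕ} (a : K) (z : Fin (m + 1) → K) :
    pathProd (Fin.cons a z : Fin (m + 2) → K) = (a - z 0)⁻¹ * pathProd z := by
  simp only [pathProd, Fin.prod_univ_succ, Fin.castSucc_zero, Fin.cons_zero, Fin.cons_succ,
    ← Fin.succ_castSucc]

lemma pathProd_snoc {m : ℕ} (z : Fin (m + 1) → K) (b : K) :
    pathProd (Fin.snoc z b : Fin (m + 2) → K) = pathProd z * (z (Fin.last m) - b)⁻¹ := by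
  simp only [pathProd, Fin.prod_univ_castSucc, Fin.snoc_castSucc, Fin.succ_castSucc,
    Fin.succ_last, Fin.snoc_last]

lemma prod_inv_sub_add_one {m : ℕ} (z : Fin (m + 1) → K) :
    ∏ t, (z t - z (t + 1))⁻¹ = pathProd (Fin.snoc z (z 0) : Fin (m + 2) → K) := by
  rw [pathProd_snoc, Fin.prod_univ_castSucc, Fin.last_add_one]
  simp only [pathProd, Fin.coeSucc_eq_succ]

section PathSums

variable {γ : Type*} [Fintype γ] [DecidableEq γ] {y : γ → K} {a b : K}

lemma sum_inv_sub_mul_pow_mul_prod_erase {k : ℕ} (hγ : Fintype.card γ = k + 2)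
    (hy : Injective y) (ha : ∀ c, y c ≠ a) (hb : ∀ c, y c ≠ b) :
    ∑ c, (a - y c)⁻¹ * ((y c - b) ^ k * ∏ d ∈ univ.erase c, ((y c - y d) * (y d - b))⁻¹) =
      (a - b) ^ (k + 1) * ∏ c, ((a - y c) * (y c - b))⁻¹ := by
  have hdeg : ((X - C b) ^ (k + 1)).degree < (#(univ : Finset γ) : WithBot ℕ) := by
    rw [degree_pow, degree_X_sub_C, card_univ, hγ, nsmul_one]
    exact_mod_cast (k + 1).lt_succ_self
  have key := Lagrange.eval_eq_eval_nodal_mul_sum hy.injOn hdeg (x := a)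
    fun c _ => (ha c).symm
  simp only [eval_pow, eval_sub, eval_X, eval_C, Lagrange.eval_nodal] at key
  have hterm : ∀ c, (a - y c)⁻¹ * ((y c - b) ^ k *
      ∏ d ∈ univ.erase c, ((y c - y d) * (y d - b))⁻¹) =
      (∏ d, (y d - b)⁻¹) *
        (Lagrange.nodalWeight univ y c * (a - y c)⁻¹ * (y c - b) ^ (k + 1)) := by
    intro c
    have hP : ∏ d ∈ univ.erase c, (y d - b)⁻¹ = (∏ d, (y d - b)⁻¹) * (y c - b) := by
      rw [← prod_erase_mul univ _ (mem_univ c), mul_assoc,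
        inv_mul_cancel₀ (sub_ne_zero.mpr (hb c)), mul_one]
    rw [prod_congr rfl fun d _ => mul_inv _ _, prod_mul_distrib, hP, Lagrange.nodalWeight]
    ring
  have hA : ∏ c, (a - y c) ≠ 0 := prod_ne_zero_iff.mpr fun c _ => sub_ne_zero.mpr (ha c).symm
  rw [sum_congr rfl fun c _ => hterm c, ← mul_sum, key, prod_congr rfl fun c _ => mul_inv _ _,
    prod_mul_distrib, prod_inv_distrib (fun c => a - y c), mul_right_comm,
    mul_inv_cancel_left₀ hA]

theorem sum_pathProd_cons_snoc {k : ℕ} (hγ : Fintype.card γ = k + 1) (hy : Injective y)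
    (ha : ∀ c, y c ≠ a) (hb : ∀ c, y c ≠ b) :
    ∑ w : Fin (k + 1) ≃ γ, pathProd (Fin.cons a (Fin.snoc (y ∘ w) b : Fin (k + 2) → K)) =
      (a - b) ^ k * ∏ c, ((a - y c) * (y c - b))⁻¹ := by
  induction k generalizing γ a with
  | zero =>
    have : Subsingleton γ := Fintype.card_le_one_iff_subsingleton.mp hγ.le
    obtain ⟨w⟩ : Nonempty (Fin 1 ≃ γ) := ⟨Fintype.equivOfCardEq (by simp [hγ])⟩
    rw [Fintype.sum_subsingleton _ w, Fintype.prod_subsingleton _ (w 0), pathProd_cons,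
      pathProd_snoc]
    simp [pathProd, mul_comm]
  | succ k ih =>
    rw [sum_finConsEquiv, ← sum_inv_sub_mul_pow_mul_prod_erase hγ hy ha hb]
    refine sum_congr rfl fun c _ => ?_
    have ih' := ih (y := fun d : {d // d ≠ c} => y d) (a := y c)
      (Fintype.card_subtype_ne hγ c) (hy.comp Subtype.val_injective) (fun d h => d.2 (hy h))
      fun d => hb d
    have hstep : ∀ w : Fin (k + 1) ≃ {d // d ≠ c},
        pathProd (Fin.cons a (Fin.snoc (y ∘ finConsEquiv c w) b : Fin (k + 3) → K)) =
          (a - y c)⁻¹ * pathProd (Fin.cons (y c)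
            (Fin.snoc ((fun d : {d // d ≠ c} => y d) ∘ w) b : Fin (k + 2) → K)) := by
      intro w
      rw [comp_finConsEquiv, ← Fin.cons_snoc_eq_snoc_cons, pathProd_cons, Fin.cons_zero]
      rfl
    rw [sum_congr rfl fun w _ => hstep w, ← mul_sum, ih']
    congr 2
    exact (prod_subtype _ (by simp) fun d => ((y c - y d) * (y d - b))⁻¹).symm

theorem sum_prod_inv_sub_add_one_eq_zero {m : ℕ} (hγ : Fintype.card γ = m + 3)
    (hy : Injective y) : ∑ v : Fin (m + 3) ≃ γ, ∏ t, (y (v t) - y (v (t + 1)))⁻¹ = 0 := by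
  rw [sum_finConsEquiv]
  refine sum_eq_zero fun c _ => ?_
  have key := sum_pathProd_cons_snoc (y := fun d : {d // d ≠ c} => y d) (a := y c) (b := y c)
    (Fintype.card_subtype_ne hγ c) (hy.comp Subtype.val_injective) (fun d h => d.2 (hy h))
    fun d h => d.2 (hy h)
  rw [sub_self, zero_pow m.succ_ne_zero, zero_mul] at key
  rw [← key]
  refine sum_congr rfl fun w _ => ?_
  rw [prod_inv_sub_add_one fun t => y (finConsEquiv c w t)]
  change pathProd (Fin.snoc (y ∘ finConsEquiv c w) _) = _
  rw [comp_finConsEquiv, ← Fin.cons_snoc_eq_snoc_cons]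
  rfl

end PathSums

theorem sum_prod_inv_sub_eq_zero_of_cycle {α β : Type*} [Fintype α] [DecidableEq α] [Fintype β]
    [DecidableEq β] [CharZero K] {θ : Equiv.Perm α} {m : ℕ} {E : Fin (m + 3) ↪ α}
    (hE : ∀ t, θ (E t) = E (t + 1)) {x : β → K} (hx : Injective x) :
    ∑ e : α ≃ β, ∏ s, (x (e s) - x (e (θ s)))⁻¹ = 0 := by
  refine sum_eq_zero_of_forall_sum_perm_apply_eq_zero
    (fun ρ : Equiv.Perm (Fin (m + 3)) => (ρ.viaFintypeEmbedding E).symm.equivCongr (.refl β))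
    fun e => ?_
  simp only [Equiv.equivCongr_apply_apply, Equiv.symm_symm, Equiv.refl_apply]
  refine (sum_congr rfl fun ρ _ => Equiv.Perm.prod_viaFintypeEmbedding (θ' := .addRight 1) hE ρ
    fun s s' => (x (e s) - x (e s'))⁻¹).trans ?_
  rw [← sum_mul]
  exact mul_eq_zero_of_left (sum_prod_inv_sub_add_one_eq_zero (y := x ∘ e ∘ E)
    (Fintype.card_fin _) (hx.comp (e.injective.comp E.injective))) _

section Zigzag

variable {ι : Type*}

def sumZigzag (σ τ : Equiv.Perm ι) : Equiv.Perm (ι ⊕ ι) :=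
  (Equiv.sumCongr σ τ.symm).trans (Equiv.sumComm ι ι)

@[simp] lemma sumZigzag_inl (σ τ : Equiv.Perm ι) (i : ι) :
    sumZigzag σ τ (.inl i) = .inr (σ i) := rfl

@[simp] lemma sumZigzag_inr (σ τ : Equiv.Perm ι) (i : ι) :
    sumZigzag σ τ (.inr i) = .inl (τ.symm i) := rfl

lemma prod_inv_sub_sumZigzag [Fintype ι] (σ τ : Equiv.Perm ι) (z : ι ⊕ ι → K) :
    ∏ s, (z s - z (sumZigzag σ τ s))⁻¹ = (-1) ^ Fintype.card ι *
      ∏ i, ((z (.inl i) - z (.inr (σ i))) * (z (.inl i) - z (.inr (τ i))))⁻¹ := by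
  have hneg : ∀ i, (z (.inr (τ i)) - z (.inl i))⁻¹ = -1 * (z (.inl i) - z (.inr (τ i)))⁻¹ :=
    fun i => by rw [← neg_sub, inv_neg, neg_one_mul]
  rw [Fintype.prod_sum_type,
    ← Equiv.prod_comp τ fun j => (z (.inr j) - z (sumZigzag σ τ (.inr j)))⁻¹]
  simp only [sumZigzag_inl, sumZigzag_inr, Equiv.symm_apply_apply, hneg, mul_inv,
    prod_mul_distrib, prod_const, card_univ]
  ring

end Zigzag

theorem statement18_general (n : ℕ) (lam : Fin (2 * n) → ℝ)
    (hlam : Function.Injective lam)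
    (σ τ : Equiv.Perm (Fin n)) (hστ : σ ≠ τ) :
    ∑ e : (Fin n ⊕ Fin n) ≃ Fin (2 * n), ∏ i : Fin n,
      1 / ((lam (e (Sum.inl i)) - lam (e (Sum.inr (σ i)))) *
        (lam (e (Sum.inl i)) - lam (e (Sum.inr (τ i))))) = 0 := by
  obtain ⟨i, hi⟩ : ∃ i, σ i ≠ τ i := not_forall.mp (mt Equiv.ext hστ)
  obtain ⟨m, E, hE⟩ := (sumZigzag σ τ).exists_cycle_enumeration (s := .inl i) (by simp)
    (by simpa [Equiv.symm_apply_eq] using hi)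
  have key := sum_prod_inv_sub_eq_zero_of_cycle hE hlam
  simp_rw [prod_inv_sub_sumZigzag] at key
  rw [← mul_sum] at key
  simpa [one_div] using key

/-- The sum is over all bijections `e` from `{1,…,n} ⊔ {1,…,n}` onto `{1,…,2n}`; `f` is
the restriction of `e` to the first copy and `g` the restriction to the second copy. -/
theorem statement18 (n : ℕ) (hn : 1 ≤ n) (lam : Fin (2 * n) → ℝ)
    (hlam : Function.Injective lam)
    (σ τ : Equiv.Perm (Fin n)) (hστ : σ ≠ τ) :
    ∑ e : (Fin n ⊕ Fin n) ≃ Fin (2 * n), ∏ i : Fin n,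
      1 / ((lam (e (Sum.inl i)) - lam (e (Sum.inr (σ i)))) *
        (lam (e (Sum.inl i)) - lam (e (Sum.inr (τ i))))) = 0 :=
  statement18_general n lam hlam σ τ hστ
end
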